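/- For every integer r ≥ 3 there exists N such that for all n ≥ N the following holds: for every nonempty X ⊆ [2,r+1] with X ≠ {2}, writing m = max X, and for every MLCIF 𝒜 ∈ ⋃_{j=2}^{r+1} I_j with 𝒜 ≠ AHM_m, we have hit_X(AHM_m) > hit_X(𝒜). -/

import Mathlib

open Finset

/-- The family of all `r`-element subsets of `[n] = {1, …, n}`. -/
def chooseFam (n r : ℕ) : Finset (Finset ℕ) := (Finset.Icc 1 n).powersetCard r

/-- A family of sets is intersecting if any two members meet. -/
def IntersectingFam (𝒜 : Finset (Finset ℕ)) : Prop :=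
  ∀ A ∈ 𝒜, ∀ B ∈ 𝒜, (A ∩ B).Nonempty

/-- `DomLE B A` : writing the elements in increasing order, the `i`-th element
of `B` is at most the `i`-th element of `A` (and they have the same size). -/
def DomLE (B A : Finset ℕ) : Prop :=
  B.card = A.card ∧
  ∀ (i : ℕ) (hB : i < (B.sort (· ≤ ·)).length) (hA : i < (A.sort (· ≤ ·)).length),
    (B.sort (· ≤ ·)).get ⟨i, hB⟩ ≤ (A.sort (· ≤ ·)).get ⟨i, hA⟩

/-- A family of `r`-subsets of `[n]` is left-compressed if it is downward closed
under the domination order. -/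
def LeftCompressed (n r : ℕ) (𝒜 : Finset (Finset ℕ)) : Prop :=
  ∀ A ∈ 𝒜, ∀ B ∈ chooseFam n r, DomLE B A → B ∈ 𝒜

/-- A left-compressed intersecting family in `([n] choose r)`. -/
def IsLCIF (n r : ℕ) (𝒜 : Finset (Finset ℕ)) : Prop :=
  𝒜 ⊆ chooseFam n r ∧ IntersectingFam 𝒜 ∧ LeftCompressed n r 𝒜

/-- A maximal left-compressed intersecting family. -/
def IsMLCIF (n r : ℕ) (𝒜 : Finset (Finset ℕ)) : Prop :=
  IsLCIF n r 𝒜 ∧ ∀ ℬ : Finset (Finset ℕ), IsLCIF n r ℬ → 𝒜 ⊆ ℬ → ℬ = 𝒜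

/-- The number of members of `𝒜` hitting `X`. -/
def hit (X : Finset ℕ) (𝒜 : Finset (Finset ℕ)) : ℕ :=
  (𝒜.filter fun A => (A ∩ X).Nonempty).card

/-- An MLCIF optimal for `X`: it maximises `hit X` among all MLCIFs. -/
def OptimalMLCIF (n r : ℕ) (X : Finset ℕ) (𝒜 : Finset (Finset ℕ)) : Prop :=
  IsMLCIF n r 𝒜 ∧ ∀ ℬ : Finset (Finset ℕ), IsMLCIF n r ℬ → hit X ℬ ≤ hit X 𝒜

/-- An LCIF optimal for `X` among all LCIFs. -/
def OptimalLCIF (n r : ℕ) (X : Finset ℕ) (𝒜 : Finset (Finset ℕ)) : Prop :=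
  IsLCIF n r 𝒜 ∧ ∀ ℬ : Finset (Finset ℕ), IsLCIF n r ℬ → hit X ℬ ≤ hit X 𝒜

/-- The `t`-adjusted Hilton–Milner family. -/
def AHM (n r t : ℕ) : Finset (Finset ℕ) :=
  (chooseFam n r).filter fun A =>
    (1 ∈ A ∧ (A ∩ Finset.Icc 2 t).Nonempty) ∨ Finset.Icc 2 t ⊆ A

/-- The star: all `r`-subsets of `[n]` containing `1`. -/
def starFam (n r : ℕ) : Finset (Finset ℕ) :=
  (chooseFam n r).filter fun A => 1 ∈ A

/-- `G ⊆ [n]` is a potential generator of `𝒜`: every `A ∈ ([n] choose r)`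
containing `G` lies in `𝒜`. -/
def PotGen (n r : ℕ) (𝒜 : Finset (Finset ℕ)) (G : Finset ℕ) : Prop :=
  G ⊆ Finset.Icc 1 n ∧ ∀ A ∈ chooseFam n r, G ⊆ A → A ∈ 𝒜

open Classical in
/-- The canonical generating family: all inclusion-minimal potential generators. -/
noncomputable def canonGen (n r : ℕ) (𝒜 : Finset (Finset ℕ)) : Finset (Finset ℕ) :=
  (Finset.Icc 1 n).powerset.filter fun G =>
    PotGen n r 𝒜 G ∧ ∀ G' ⊆ G, PotGen n r 𝒜 G' → G' = G

/-- The rank of `𝒜`: the smallest size of a generator. -/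
noncomputable def rankFam (n r : ℕ) (𝒜 : Finset (Finset ℕ)) : ℕ :=
  sInf {k : ℕ | ∃ G ∈ canonGen n r 𝒜, G.card = k}

/-- The family generated by `𝒢` with respect to `n` and `r`. -/
def genFam (n r : ℕ) (𝒢 : Finset (Finset ℕ)) : Finset (Finset ℕ) :=
  (chooseFam n r).filter fun A => ∃ G ∈ 𝒢, G ⊆ A

/-- `𝒜 ∈ I_j`: an MLCIF of rank two whose generators of size two are precisely
`{1,2}, {1,3}, …, {1,j}`. -/
noncomputable def MemI (n r j : ℕ) (𝒜 : Finset (Finset ℕ)) : Prop :=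
  IsMLCIF n r 𝒜 ∧ rankFam n r 𝒜 = 2 ∧
    (canonGen n r 𝒜).filter (fun G => G.card = 2) =
      (Finset.Icc 2 j).image fun i => ({1, i} : Finset ℕ)

/-!
Let `𝒜 ∈ I_j`. The pairs `{1, i}`, `2 ≤ i ≤ j`, are potential generators, so `𝒜` contains the
core `{A ∋ 1 | A ∩ [2, j] ≠ ∅}`, and since `𝒜` is intersecting, every member without `1`
contains `[2, j]`.

If `m ≤ j`, every member of `𝒜` hitting `X` lies in `AHM_m`, and `AHM_m` has one more member
hitting `X`: for `m < j` an `r`-set containing `[2, m]` but neither `1` nor `j`; for `m = j` an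
`r`-set containing `[2, j]` outside `𝒜`, which exists because otherwise `[2, j]` would be a
potential generator, forcing `𝒜 = AHM_j`.

If `j < m`, maximality and left-compression show that each member of `𝒜` outside the core has
three elements in `[1, r + 2]`, so there are `O(n ^ (r - 3))` of them, while `AHM_m` contains the
`Θ(n ^ (r - 2))` sets through `1` and `m` that miss `[2, j]`.
-/

def countLE (A : Finset ℕ) (t : ℕ) : ℕ := #{a ∈ A | a ≤ t}

theorem List.getElem_le_iff_lt_length_filter {l : List ℕ} (hl : l.Pairwise (· < ·)) (t : ℕ)
    {i : ℕ} (hi : i < l.length) : l[i] ≤ t ↔ i < (l.filter (· ≤ t)).length := by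
  induction l generalizing i with
  | nil => simp at hi
  | cons a l ih =>
    rw [List.pairwise_cons] at hl
    by_cases hat : a ≤ t
    · cases i with
      | zero => simp [hat]
      | succ i => simp [hat, ih hl.2 (Nat.lt_of_succ_lt_succ hi)]
    · have hnil : l.filter (· ≤ t) = [] := List.filter_eq_nil_iff.2 fun x hx => by
        simpa using fun hxt => hat ((hl.1 x hx).le.trans hxt)
      cases i with
      | zero => simp [hat, hnil]
      | succ i =>
        simp only [List.getElem_cons_succ, List.filter_cons, hat, decide_false, hnil]
        simpa using fun h => hat ((hl.1 _ (List.getElem_mem _)).le.trans h)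

theorem countLE_eq_length_filter_sort (A : Finset ℕ) (t : ℕ) :
    countLE A t = ((A.sort (· ≤ ·)).filter (· ≤ t)).length := by
  rw [countLE, Finset.card_def, Finset.filter_val, ← Finset.sort_eq A (· ≤ ·),
    Multiset.filter_coe, Multiset.coe_card]

theorem sort_get_le_iff (A : Finset ℕ) (t : ℕ) {i : ℕ} (hi : i < (A.sort (· ≤ ·)).length) :
    (A.sort (· ≤ ·)).get ⟨i, hi⟩ ≤ t ↔ i < countLE A t := by
  rw [countLE_eq_length_filter_sort, List.get_eq_getElem]
  exact List.getElem_le_iff_lt_length_filter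
    (List.sortedLT_iff_pairwise.1 (Finset.sortedLT_sort A)) t hi

theorem domLE_iff {A B : Finset ℕ} :
    DomLE B A ↔ B.card = A.card ∧ ∀ t, countLE A t ≤ countLE B t := by
  refine ⟨fun ⟨hcard, hle⟩ => ⟨hcard, fun t => ?_⟩, fun ⟨hcard, hle⟩ => ⟨hcard, fun i hB hA => ?_⟩⟩
  · obtain h0 | hpos := Nat.eq_zero_or_pos (countLE A t)
    · omega
    have hA : countLE A t - 1 < (A.sort (· ≤ ·)).length := by
      have : countLE A t ≤ A.card := card_filter_le _ _
      rw [Finset.length_sort]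
      omega
    have hB : countLE A t - 1 < (B.sort (· ≤ ·)).length := by
      rwa [Finset.length_sort, hcard, ← Finset.length_sort (· ≤ ·)]
    have := (sort_get_le_iff B t hB).1 ((hle _ hB hA).trans ((sort_get_le_iff A t hA).2 (by omega)))
    omega
  · exact (sort_get_le_iff B _ hB).2 (((sort_get_le_iff A _ hA).1 le_rfl).trans_le (hle _))

theorem domLE_insert_erase {A : Finset ℕ} {x y : ℕ} (hy : y ∈ A) (hx : x ∉ A) (hxy : x < y) :
    DomLE (insert x (A.erase y)) A := by
  refine domLE_iff.2 ⟨?_, fun t => ?_⟩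
  · rw [card_insert_of_notMem fun h => hx (mem_of_mem_erase h), card_erase_add_one hy]
  · unfold countLE
    rw [filter_insert, filter_erase]
    split_ifs with hxt
    · have := pred_card_le_card_erase (s := A.filter (· ≤ t)) (a := y)
      rw [card_insert_of_notMem fun h => hx (mem_filter.1 (mem_of_mem_erase h)).1]
      omega
    · have hyt : y ∉ A.filter (· ≤ t) := fun h => hxt (hxy.le.trans (mem_filter.1 h).2)
      rw [erase_eq_of_notMem hyt]

theorem domLE_of_forall_le_mem {A B : Finset ℕ} (p : ℕ → Prop) (hcard : B.card = A.card)
    (hA : ∀ a ∈ A, p a) (hB : ∀ s, p s → ∀ b ∈ B, s ≤ b → s ∈ B) : DomLE B A := by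
  refine domLE_iff.2 ⟨hcard, fun t => ?_⟩
  by_cases hBt : ∀ b ∈ B, b ≤ t
  · rw [countLE, countLE, filter_true_of_mem hBt, hcard]
    exact card_filter_le _ _
  · push Not at hBt
    obtain ⟨b, hb, htb⟩ := hBt
    refine card_le_card fun a ha => ?_
    rw [mem_filter] at ha ⊢
    exact ⟨hB a (hA a ha.1) b hb (ha.2.trans htb.le), ha.2⟩

theorem card_le_countLE_of_domLE {A B K : Finset ℕ} {t : ℕ} (h : DomLE B A) (hKA : K ⊆ A)
    (hKt : ∀ k ∈ K, k ≤ t) : K.card ≤ countLE B t :=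
  (card_le_card fun k hk => mem_filter.2 ⟨hKA hk, hKt k hk⟩).trans ((domLE_iff.1 h).2 t)

section Families

variable {n r : ℕ} {𝒜 : Finset (Finset ℕ)}

theorem mem_chooseFam {A : Finset ℕ} : A ∈ chooseFam n r ↔ A ⊆ Icc 1 n ∧ A.card = r :=
  mem_powersetCard

theorem exists_mem_chooseFam_superset_disjoint {K F : Finset ℕ} (hK : K ⊆ Icc 1 n)
    (hKr : K.card ≤ r) (hKF : Disjoint K F) (hn : F.card + r ≤ n) :
    ∃ B ∈ chooseFam n r, K ⊆ B ∧ Disjoint B F := by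
  have hroom : r - K.card ≤ #(Icc 1 n \ (F ∪ K)) := by
    have hsdiff := le_card_sdiff (F ∪ K) (Icc 1 n)
    rw [Nat.card_Icc] at hsdiff
    have := card_union_le F K
    omega
  obtain ⟨S, hS, hScard⟩ := exists_subset_card_eq hroom
  have hSn : S ⊆ Icc 1 n := hS.trans sdiff_subset
  have hSFK : Disjoint S (F ∪ K) := disjoint_of_subset_left hS sdiff_disjoint
  rw [disjoint_union_right] at hSFK
  refine ⟨K ∪ S, mem_chooseFam.2 ⟨union_subset hK hSn, ?_⟩, subset_union_left,
    disjoint_union_left.2 ⟨hKF, hSFK.1⟩⟩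
  rw [card_union_of_disjoint hSFK.2.symm]
  omega

theorem one_mem_of_domLE {A B : Finset ℕ} (hB : B ⊆ Icc 1 n) (h : DomLE B A) (h1 : 1 ∈ A) :
    1 ∈ B := by
  obtain ⟨b, hb⟩ := card_pos.1 (card_le_countLE_of_domLE (t := 1) h (singleton_subset_iff.2 h1)
    (by simp) : 0 < countLE B 1)
  rw [mem_filter] at hb
  have := mem_Icc.1 (hB hb.1)
  exact (show b = 1 by omega) ▸ hb.1

theorem exists_mem_Icc_two_of_two_le_countLE {B : Finset ℕ} {t : ℕ} (hB : B ⊆ Icc 1 n)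
    (h : 2 ≤ countLE B t) : ∃ c ∈ B, c ∈ Icc 2 t := by
  obtain ⟨a, ha, b, hb, hab⟩ := one_lt_card.1 h
  rw [mem_filter] at ha hb
  have := mem_Icc.1 (hB ha.1)
  have := mem_Icc.1 (hB hb.1)
  by_cases ha1 : a = 1
  · exact ⟨b, hb.1, mem_Icc.2 ⟨by omega, hb.2⟩⟩
  · exact ⟨a, ha.1, mem_Icc.2 ⟨by omega, ha.2⟩⟩

theorem LeftCompressed.insert_erase_mem (h : LeftCompressed n r 𝒜) (h𝒜 : 𝒜 ⊆ chooseFam n r)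
    {A : Finset ℕ} {x y : ℕ} (hA : A ∈ 𝒜) (hy : y ∈ A) (hx : x ∉ A) (hx1 : 1 ≤ x) (hxy : x < y) :
    insert x (A.erase y) ∈ 𝒜 := by
  obtain ⟨hAn, hAr⟩ := mem_chooseFam.1 (h𝒜 hA)
  have hdom := domLE_insert_erase hy hx hxy
  refine h A hA _ (mem_chooseFam.2 ⟨insert_subset ?_ ((erase_subset y A).trans hAn), ?_⟩) hdom
  · have := mem_Icc.1 (hAn hy)
    exact mem_Icc.2 ⟨hx1, by omega⟩
  · rw [hdom.1, hAr]

theorem LeftCompressed.mem_of_forall_le_mem (h : LeftCompressed n r 𝒜)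
    (h𝒜 : 𝒜 ⊆ chooseFam n r) {A B : Finset ℕ} (hA : A ∈ 𝒜) (hB : B ∈ chooseFam n r)
    (p : ℕ → Prop) (hAp : ∀ a ∈ A, p a) (hBp : ∀ s, p s → ∀ b ∈ B, s ≤ b → s ∈ B) : B ∈ 𝒜 :=
  h A hA B hB <| domLE_of_forall_le_mem p
    ((mem_chooseFam.1 hB).2.trans (mem_chooseFam.1 (h𝒜 hA)).2.symm) hAp hBp

theorem IntersectingFam.inter_nonempty_of_potGen (h : IntersectingFam 𝒜) {A K : Finset ℕ}
    (hA : A ∈ 𝒜) (hK : PotGen n r 𝒜 K) (hKr : K.card ≤ r) (hn : A.card + r ≤ n) :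
    (A ∩ K).Nonempty := by
  by_contra hAK
  rw [not_nonempty_iff_eq_empty, ← disjoint_iff_inter_eq_empty] at hAK
  obtain ⟨B, hB, hKB, hBA⟩ := exists_mem_chooseFam_superset_disjoint hK.1 hKr hAK.symm hn
  exact not_nonempty_iff_eq_empty.2 (disjoint_iff_inter_eq_empty.1 hBA.symm)
    (h A hA B (hK.2 B hB hKB))

theorem mem_canonGen {G : Finset ℕ} :
    G ∈ canonGen n r 𝒜 ↔ PotGen n r 𝒜 G ∧ ∀ G' ⊆ G, PotGen n r 𝒜 G' → G' = G := by
  classical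
  simp only [canonGen, mem_filter, mem_powerset]
  exact ⟨fun h => h.2, fun h => ⟨h.1.1, h⟩⟩

theorem exists_mem_canonGen_subset {G : Finset ℕ} (hG : PotGen n r 𝒜 G) :
    ∃ G' ∈ canonGen n r 𝒜, G' ⊆ G := by
  obtain ⟨G', hG'G, hmin⟩ := exists_minimal_le_of_wellFoundedLT (PotGen n r 𝒜) G hG
  exact ⟨G', mem_canonGen.2 ⟨hmin.prop, fun G'' hG'' hpot => le_antisymm hG'' (hmin.2 hpot hG'')⟩,
    hG'G⟩

/-- `hmeet` and `hcomp` say that adding all `r`-sets above `K` to `𝒜` keeps it a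
left-compressed intersecting family, so by maximality they were already there. -/
theorem IsMLCIF.potGen_of_forall_inter_nonempty (h : IsMLCIF n r 𝒜) {K : Finset ℕ}
    (hK : K ⊆ Icc 1 n) (hK0 : K.Nonempty) (hmeet : ∀ A ∈ 𝒜, (A ∩ K).Nonempty)
    (hcomp : ∀ A ∈ chooseFam n r, K ⊆ A → ∀ B ∈ chooseFam n r, DomLE B A → B ∈ 𝒜 ∨ K ⊆ B) :
    PotGen n r 𝒜 K := by
  obtain ⟨⟨h𝒜, hint, hlc⟩, hmax⟩ := h
  set ℬ := 𝒜 ∪ {A ∈ chooseFam n r | K ⊆ A}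
  have hmem : ∀ A ∈ ℬ, A ∈ 𝒜 ∨ (A ∈ chooseFam n r ∧ K ⊆ A) := by simp [ℬ]
  have hℬ : IsLCIF n r ℬ := by
    refine ⟨union_subset h𝒜 (filter_subset _ _), fun A hA B hB => ?_, fun A hA B hB hBA => ?_⟩
    · rcases hmem A hA with hA | ⟨-, hKA⟩ <;> rcases hmem B hB with hB | ⟨-, hKB⟩
      · exact hint A hA B hB
      · exact (hmeet A hA).mono (inter_subset_inter_left hKB)
      · exact ((hmeet B hB).mono (inter_subset_inter_left hKA)).mono (inter_comm B A).le
      · exact hK0.mono (subset_inter hKA hKB)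
    · rcases hmem A hA with hA | ⟨hAc, hKA⟩
      · exact mem_union_left _ (hlc A hA B hB hBA)
      · rcases hcomp A hAc hKA B hB hBA with hB𝒜 | hKB
        · exact mem_union_left _ hB𝒜
        · exact mem_union_right _ (mem_filter.2 ⟨hB, hKB⟩)
  have hℬ𝒜 := hmax ℬ hℬ subset_union_left
  exact ⟨hK, fun A hA hKA => hℬ𝒜 ▸ mem_union_right _ (mem_filter.2 ⟨hA, hKA⟩)⟩

end Families

theorem card_filter_le_card_inter_le {n r k : ℕ} {W : Finset ℕ} (hW : W ⊆ Icc 1 n) (hk : k ≤ r) :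
    #{A ∈ chooseFam n r | k ≤ #(A ∩ W)} ≤ (#W).choose k * (n - k).choose (r - k) := by
  have hcover : {A ∈ chooseFam n r | k ≤ #(A ∩ W)} ⊆
      (W.powersetCard k).biUnion fun P => {A ∈ chooseFam n r | P ⊆ A} := by
    intro A hA
    rw [mem_filter] at hA
    obtain ⟨P, hP, hPk⟩ := exists_subset_card_eq hA.2
    exact mem_biUnion.2 ⟨P, mem_powersetCard.2 ⟨hP.trans inter_subset_right, hPk⟩,
      mem_filter.2 ⟨hA.1, hP.trans inter_subset_left⟩⟩
  have hsupersets :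
      ∀ P ∈ W.powersetCard k, #{A ∈ chooseFam n r | P ⊆ A} = (n - k).choose (r - k) := by
    intro P hP
    rw [mem_powersetCard] at hP
    have := card_filter_powersetCard_subset P (Icc 1 n) r (hP.1.trans hW) (hP.2 ▸ hk)
    rwa [Nat.card_Icc, hP.2, Nat.add_sub_cancel] at this
  calc _ ≤ _ := card_le_card hcover
    _ ≤ _ := card_biUnion_le
    _ = (#W).choose k * (n - k).choose (r - k) := by
      rw [sum_congr rfl hsupersets, sum_const, card_powersetCard, smul_eq_mul]

theorem Nat.choose_succ_le_two_mul_choose {s k : ℕ} (h : 2 * k ≤ s + 1) :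
    (s + 1).choose k ≤ 2 * s.choose k := by
  have hid := Nat.choose_mul_succ_eq s k
  refine Nat.le_of_mul_le_mul_right ?_ s.succ_pos
  calc (s + 1).choose k * (s + 1) ≤ (s + 1).choose k * (2 * (s + 1 - k)) :=
        Nat.mul_le_mul_left _ (by omega)
    _ = 2 * s.choose k * (s + 1) := by rw [mul_left_comm, ← hid, mul_assoc]

theorem Nat.choose_add_le_two_pow_mul_choose {b k : ℕ} (d : ℕ) (h : 2 * k ≤ b + 1) :
    (b + d).choose k ≤ 2 ^ d * b.choose k := by
  induction d with
  | zero => simp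
  | succ d ih =>
    calc (b + (d + 1)).choose k ≤ 2 * (b + d).choose k :=
          Nat.choose_succ_le_two_mul_choose (s := b + d) (by omega)
      _ ≤ 2 ^ (d + 1) * b.choose k := by rw [pow_succ, mul_comm _ 2, mul_assoc]; omega

theorem Nat.mul_choose_add_lt_choose_succ {K b d k : ℕ} (hk : 2 * k ≤ b + 1)
    (hK : K * 2 ^ d * (k + 1) < b - k) : K * (b + d).choose k < b.choose (k + 1) := by
  have hpos : 0 < b.choose k := Nat.choose_pos (by omega)
  refine Nat.lt_of_mul_lt_mul_right (a := k + 1) ?_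
  calc K * (b + d).choose k * (k + 1) ≤ K * (2 ^ d * b.choose k) * (k + 1) := by
        gcongr; exact Nat.choose_add_le_two_pow_mul_choose d hk
    _ = b.choose k * (K * 2 ^ d * (k + 1)) := by ring
    _ < b.choose k * (b - k) := Nat.mul_lt_mul_of_pos_left hK hpos
    _ = b.choose (k + 1) * (k + 1) := (Nat.choose_succ_right_eq b k).symm

def coreFam (n r j : ℕ) (X : Finset ℕ) : Finset (Finset ℕ) :=
  {A ∈ chooseFam n r | 1 ∈ A ∧ (A ∩ Icc 2 j).Nonempty ∧ (A ∩ X).Nonempty}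

theorem choose_le_card_filter_disjoint {n r j m : ℕ} (hjm : j < m) (hm : 2 ≤ m) (hmr : m ≤ r + 1)
    (hr : 2 ≤ r) (hn : r + 2 ≤ n) :
    (n - r - 2).choose (r - 2) ≤ #{A ∈ chooseFam n r | 1 ∈ A ∧ m ∈ A ∧ Disjoint A (Icc 2 j)} := by
  set T := insert 1 (insert m (Icc (r + 3) n))
  have hT : T ⊆ Icc 1 n :=
    insert_subset (mem_Icc.2 ⟨le_rfl, by omega⟩)
      (insert_subset (mem_Icc.2 ⟨by omega, by omega⟩) (Icc_subset_Icc (by omega) le_rfl))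
  have hTj : Disjoint T (Icc 2 j) := by
    rw [disjoint_left]
    intro a ha
    simp only [T, mem_insert, mem_Icc] at ha ⊢
    omega
  have hTcard : #T = n - r - 2 + 2 := by
    rw [card_insert_of_notMem (by simp; omega), card_insert_of_notMem (by simp; omega),
      Nat.card_Icc]
    omega
  have h1mT : {1, m} ⊆ T := by simp [T, insert_subset_iff]
  have hcount := card_filter_powersetCard_subset _ _ r h1mT (by rw [card_pair (by omega)]; omega)
  rw [hTcard, card_pair (by omega), Nat.add_sub_cancel] at hcount
  refine hcount.symm.le.trans (card_le_card fun A hA => ?_)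
  obtain ⟨⟨hAT, hAr⟩, h1m⟩ := mem_filter.1 hA |>.imp_left mem_powersetCard.1
  exact mem_filter.2 ⟨mem_chooseFam.2 ⟨hAT.trans hT, hAr⟩, h1m (by simp), h1m (by simp),
    disjoint_of_subset_left hAT hTj⟩

theorem card_coreFam_add_choose_le_hit_AHM {n r j m : ℕ} {X : Finset ℕ} (hX : X ⊆ Icc 2 m)
    (hmX : m ∈ X) (hjm : j < m) (hmr : m ≤ r + 1) (hr : 2 ≤ r) (hn : r + 2 ≤ n) :
    #(coreFam n r j X) + (n - r - 2).choose (r - 2) ≤ hit X (AHM n r m) := by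
  have hm := mem_Icc.1 (hX hmX)
  set S := {A ∈ chooseFam n r | 1 ∈ A ∧ m ∈ A ∧ Disjoint A (Icc 2 j)}
  have hcore : coreFam n r j X ⊆ {A ∈ AHM n r m | (A ∩ X).Nonempty} := by
    intro A hA
    simp only [coreFam, mem_filter] at hA
    obtain ⟨hA, h1, -, hAX⟩ := hA
    exact mem_filter.2 ⟨mem_filter.2 ⟨hA, Or.inl ⟨h1, hAX.mono (inter_subset_inter_left hX)⟩⟩, hAX⟩
  have hS : S ⊆ {A ∈ AHM n r m | (A ∩ X).Nonempty} := by
    intro A hA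
    obtain ⟨hA, h1, hmA, -⟩ := mem_filter.1 hA
    have hmm : m ∈ A ∩ Icc 2 m := mem_inter.2 ⟨hmA, mem_Icc.2 ⟨hm.1, le_rfl⟩⟩
    exact mem_filter.2 ⟨mem_filter.2 ⟨hA, Or.inl ⟨h1, m, hmm⟩⟩, m, mem_inter.2 ⟨hmA, hmX⟩⟩
  have hdisj : Disjoint (coreFam n r j X) S := by
    rw [disjoint_left]
    intro A hA hAS
    obtain ⟨x, hx⟩ := (mem_filter.1 hA).2.2.1
    rw [mem_inter] at hx
    exact disjoint_left.1 (mem_filter.1 hAS).2.2.2 hx.1 hx.2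
  calc #(coreFam n r j X) + (n - r - 2).choose (r - 2)
      ≤ #(coreFam n r j X) + #S :=
        Nat.add_le_add_left (choose_le_card_filter_disjoint hjm hm.1 hmr hr hn) _
    _ = #(coreFam n r j X ∪ S) := (card_union_of_disjoint hdisj).symm
    _ ≤ hit X (AHM n r m) := card_le_card (union_subset hcore hS)

namespace MemI

variable {n r j : ℕ} {𝒜 : Finset (Finset ℕ)}

theorem subset_chooseFam (h : MemI n r j 𝒜) : 𝒜 ⊆ chooseFam n r := h.1.1.1

theorem intersecting (h : MemI n r j 𝒜) : IntersectingFam 𝒜 := h.1.1.2.1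

theorem leftCompressed (h : MemI n r j 𝒜) : LeftCompressed n r 𝒜 := h.1.1.2.2

theorem two_le_card_of_potGen (h : MemI n r j 𝒜) {G : Finset ℕ} (hG : PotGen n r 𝒜 G) :
    2 ≤ G.card := by
  obtain ⟨G', hG', hG'G⟩ := exists_mem_canonGen_subset hG
  calc 2 = rankFam n r 𝒜 := h.2.1.symm
    _ ≤ G'.card := Nat.sInf_le ⟨G', hG', rfl⟩
    _ ≤ G.card := card_le_card hG'G

theorem two_le (h : MemI n r j 𝒜) : 2 ≤ j := by
  have hrank := h.2.1
  have hne : {k | ∃ G ∈ canonGen n r 𝒜, G.card = k}.Nonempty := by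
    by_contra hempty
    rw [Set.not_nonempty_iff_eq_empty] at hempty
    simp [rankFam, hempty] at hrank
  obtain ⟨G, hG, hG2⟩ := Nat.sInf_mem hne
  have : G ∈ (canonGen n r 𝒜).filter (fun G => G.card = 2) := mem_filter.2 ⟨hG, hG2.trans hrank⟩
  rw [h.2.2, mem_image] at this
  obtain ⟨i, hi, -⟩ := this
  exact (mem_Icc.1 hi).1.trans (mem_Icc.1 hi).2

theorem potGen_pair (h : MemI n r j 𝒜) {i : ℕ} (hi : i ∈ Icc 2 j) : PotGen n r 𝒜 {1, i} := by
  have : ({1, i} : Finset ℕ) ∈ (canonGen n r 𝒜).filter (fun G => G.card = 2) :=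
    h.2.2 ▸ mem_image_of_mem _ hi
  exact (mem_canonGen.1 (mem_filter.1 this).1).1

theorem exists_eq_pair_of_potGen (h : MemI n r j 𝒜) {G : Finset ℕ} (hG : PotGen n r 𝒜 G)
    (hG2 : G.card = 2) : ∃ i ∈ Icc 2 j, G = {1, i} := by
  obtain ⟨G', hG', hG'G⟩ := exists_mem_canonGen_subset hG
  have hG'2 := h.two_le_card_of_potGen (mem_canonGen.1 hG').1
  obtain rfl := eq_of_subset_of_card_le hG'G (by omega)
  have : G' ∈ (canonGen n r 𝒜).filter (fun G => G.card = 2) := mem_filter.2 ⟨hG', hG2⟩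
  rw [h.2.2, mem_image] at this
  obtain ⟨i, hi, rfl⟩ := this
  exact ⟨i, hi, rfl⟩

theorem mem_of_one_mem (h : MemI n r j 𝒜) {A : Finset ℕ} (hA : A ∈ chooseFam n r) (h1 : 1 ∈ A)
    (hAj : (A ∩ Icc 2 j).Nonempty) : A ∈ 𝒜 := by
  obtain ⟨i, hi⟩ := hAj
  rw [mem_inter] at hi
  exact (h.potGen_pair hi.2).2 A hA (insert_subset h1 (singleton_subset_iff.2 hi.1))

theorem Icc_subset_of_one_notMem (h : MemI n r j 𝒜) (hr : 2 ≤ r) (hn : 2 * r ≤ n)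
    {A : Finset ℕ} (hA : A ∈ 𝒜) (h1 : 1 ∉ A) : Icc 2 j ⊆ A := by
  intro i hi
  have hAr := (mem_chooseFam.1 (h.subset_chooseFam hA)).2
  obtain ⟨x, hx⟩ := h.intersecting.inter_nonempty_of_potGen hA (h.potGen_pair hi)
    (card_le_two.trans hr) (by omega)
  rw [mem_inter, mem_insert, mem_singleton] at hx
  obtain ⟨hxA, rfl | rfl⟩ := hx
  · exact absurd hxA h1
  · exact hxA

theorem eq_AHM_of_potGen (h : MemI n r j 𝒜) (hr : 2 ≤ r) (hn : 2 * r ≤ n) (hjr : j ≤ r + 1)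
    (hK : PotGen n r 𝒜 (Icc 2 j)) : 𝒜 = AHM n r j := by
  ext A
  simp only [AHM, mem_filter]
  constructor
  · intro hA
    refine ⟨h.subset_chooseFam hA, ?_⟩
    by_cases h1 : 1 ∈ A
    · have hAr := (mem_chooseFam.1 (h.subset_chooseFam hA)).2
      exact Or.inl ⟨h1, h.intersecting.inter_nonempty_of_potGen hA hK
        (by rw [Nat.card_Icc]; omega) (by omega)⟩
    · exact Or.inr (h.Icc_subset_of_one_notMem hr hn hA h1)
  · rintro ⟨hA, ⟨h1, hAj⟩ | hjA⟩
    · exact h.mem_of_one_mem hA h1 hAj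
    · exact hK.2 A hA hjA

theorem exists_mem_one_notMem (h : MemI n r j 𝒜) (hn : 1 ≤ n) : ∃ D ∈ 𝒜, 1 ∉ D := by
  by_contra! hc
  have hpot : PotGen n r 𝒜 {1} := by
    refine h.1.potGen_of_forall_inter_nonempty (by simpa using hn) (singleton_nonempty 1)
      (fun A hA => ⟨1, by simpa using hc A hA⟩) fun A _ hA B hB hBA =>
        Or.inr (singleton_subset_iff.2 (one_mem_of_domLE (mem_chooseFam.1 hB).1 hBA
          (singleton_subset_iff.1 hA)))
  simpa using h.two_le_card_of_potGen hpot

theorem exists_mem_one_notMem_succ_notMem (h : MemI n r j 𝒜) (hjn : j + 1 ≤ n) :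
    ∃ D ∈ 𝒜, 1 ∉ D ∧ j + 1 ∉ D := by
  have hj := h.two_le
  by_contra! hc
  have hpot : PotGen n r 𝒜 {1, j + 1} := by
    refine h.1.potGen_of_forall_inter_nonempty ?_ (insert_nonempty _ _) (fun A hA => ?_) ?_
    · intro x hx
      simp only [mem_insert, mem_singleton] at hx
      exact mem_Icc.2 (by omega)
    · by_cases h1 : 1 ∈ A
      · exact ⟨1, by simp [h1]⟩
      · exact ⟨j + 1, by simp [hc A hA h1]⟩
    · intro A _ hA B hB hBA
      have hBn := (mem_chooseFam.1 hB).1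
      have h1B := one_mem_of_domLE hBn hBA (hA (mem_insert_self 1 _))
      have h2 : 2 ≤ countLE B (j + 1) := by
        have := card_le_countLE_of_domLE (t := j + 1) hBA hA (by simp)
        rwa [card_pair (by omega)] at this
      obtain ⟨c, hcB, hc⟩ := exists_mem_Icc_two_of_two_le_countLE hBn h2
      rw [mem_Icc] at hc
      by_cases hcj : c ≤ j
      · exact Or.inl (h.mem_of_one_mem hB h1B ⟨c, mem_inter.2 ⟨hcB, mem_Icc.2 ⟨hc.1, hcj⟩⟩⟩)
      · obtain rfl : c = j + 1 := by omega
        exact Or.inr (insert_subset h1B (singleton_subset_iff.2 hcB))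
  obtain ⟨i, hi, hpair⟩ := h.exists_eq_pair_of_potGen hpot (card_pair (by omega))
  have : j + 1 ∈ ({1, i} : Finset ℕ) := hpair ▸ by simp
  simp only [mem_insert, mem_singleton, mem_Icc] at this hi
  omega

theorem exists_mem_one_notMem_notMem (h : MemI n r j 𝒜) {y : ℕ} (hjy : j < y) (hyn : y ≤ n) :
    ∃ D ∈ 𝒜, 1 ∉ D ∧ y ∉ D := by
  obtain ⟨D, hD, h1, hj1⟩ := h.exists_mem_one_notMem_succ_notMem (by omega)
  by_cases hy : y ∈ D
  · have hj := h.two_le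
    have hyj : j + 1 ≠ y := fun e => hj1 (e ▸ hy)
    refine ⟨insert (j + 1) (D.erase y),
      h.leftCompressed.insert_erase_mem h.subset_chooseFam hD hy hj1 (by omega) (by omega), ?_, ?_⟩
    · simp [h1]
      omega
    · simp [hyj.symm]
  · exact ⟨D, hD, h1, hy⟩

theorem Icc_two_mem (h : MemI n r j 𝒜) (hn : r + 1 ≤ n) : Icc 2 (r + 1) ∈ 𝒜 := by
  obtain ⟨D, hD, h1⟩ := h.exists_mem_one_notMem (by omega)
  have hDn := (mem_chooseFam.1 (h.subset_chooseFam hD)).1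
  refine h.leftCompressed.mem_of_forall_le_mem h.subset_chooseFam hD
    (mem_chooseFam.2 ⟨Icc_subset_Icc (by omega) hn, by simp⟩) (2 ≤ ·) (fun a ha => ?_)
    (fun s hs b hb hsb => mem_Icc.2 ⟨hs, hsb.trans (mem_Icc.1 hb).2⟩)
  have := mem_Icc.1 (hDn ha)
  have : a ≠ 1 := fun e => h1 (e ▸ ha)
  omega

/-- `A` meets `[2, r + 1] ∈ 𝒜` in some `y`, and also meets `[2, r + 2] \ {y}`, which lies in `𝒜`
as a compression of a member avoiding both `1` and `y`. -/
theorem exists_ne_mem_Icc_of_disjoint (h : MemI n r j 𝒜) (hn : r + 2 ≤ n) {A : Finset ℕ}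
    (hA : A ∈ 𝒜) (hAj : Disjoint A (Icc 2 j)) :
    ∃ y ∈ A, ∃ z ∈ A, y ≠ z ∧ y ∈ Icc (j + 1) (r + 2) ∧ z ∈ Icc (j + 1) (r + 2) := by
  have above_j : ∀ x ∈ A, 2 ≤ x → j + 1 ≤ x := fun x hx hx2 => by
    by_contra hxj
    exact disjoint_left.1 hAj hx (mem_Icc.2 ⟨hx2, by omega⟩)
  obtain ⟨y, hy⟩ := h.intersecting A hA _ (h.Icc_two_mem (by omega))
  rw [mem_inter, mem_Icc] at hy
  obtain ⟨D, hD, h1D, hyD⟩ := h.exists_mem_one_notMem_notMem (above_j y hy.1 hy.2.1) (by omega)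
  have hDn := (mem_chooseFam.1 (h.subset_chooseFam hD)).1
  have hE : (Icc 2 (r + 2)).erase y ∈ 𝒜 := by
    refine h.leftCompressed.mem_of_forall_le_mem h.subset_chooseFam hD
      (mem_chooseFam.2 ⟨(erase_subset _ _).trans (Icc_subset_Icc (by omega) hn), ?_⟩)
      (fun s => 2 ≤ s ∧ s ≠ y) (fun a ha => ?_) (fun s hs b hb hsb => ?_)
    · rw [card_erase_of_mem (mem_Icc.2 ⟨hy.2.1, by omega⟩), Nat.card_Icc]
      omega
    · have := mem_Icc.1 (hDn ha)
      exact ⟨by_contra fun h2 => h1D (show a = 1 by omega ▸ ha), fun e => hyD (e ▸ ha)⟩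
    · rw [mem_erase, mem_Icc] at hb ⊢
      exact ⟨hs.2, hs.1, hsb.trans hb.2.2⟩
  obtain ⟨z, hz⟩ := h.intersecting A hA _ hE
  rw [mem_inter, mem_erase, mem_Icc] at hz
  exact ⟨y, hy.1, z, hz.1, hz.2.1.symm, mem_Icc.2 ⟨above_j y hy.1 hy.2.1, by omega⟩,
    mem_Icc.2 ⟨above_j z hz.1 hz.2.2.1, hz.2.2.2⟩⟩

theorem exists_mem_one_mem_disjoint_of_three (h : MemI n r 3 𝒜) (hr : 2 ≤ r) (hn : 2 * r ≤ n) :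
    ∃ A ∈ 𝒜, 1 ∈ A ∧ Disjoint A (Icc 2 3) := by
  by_contra! hc
  have h23 : Icc 2 3 = ({2, 3} : Finset ℕ) := by decide
  have hpot : PotGen n r 𝒜 {2, 3} := by
    refine h.1.potGen_of_forall_inter_nonempty ?_ (insert_nonempty _ _) (fun A hA => ?_) ?_
    · intro x hx
      simp only [mem_insert, mem_singleton] at hx
      exact mem_Icc.2 (by omega)
    · by_cases h1 : 1 ∈ A
      · simpa [h23, ← not_disjoint_iff_nonempty_inter] using hc A hA h1
      · exact ⟨2, mem_inter.2 ⟨h.Icc_subset_of_one_notMem hr hn hA h1 (by simp), by simp⟩⟩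
    · intro A _ hA B hB hBA
      have hBn := (mem_chooseFam.1 hB).1
      have h2 : 2 ≤ countLE B 3 := by
        have := card_le_countLE_of_domLE (t := 3) hBA hA (by simp)
        rwa [card_pair (by omega)] at this
      by_cases h1B : 1 ∈ B
      · obtain ⟨c, hcB, hc⟩ := exists_mem_Icc_two_of_two_le_countLE hBn h2
        exact Or.inl (h.mem_of_one_mem hB h1B ⟨c, mem_inter.2 ⟨hcB, hc⟩⟩)
      · have hsub : {b ∈ B | b ≤ 3} ⊆ {2, 3} := fun b hb => by
          rw [mem_filter] at hb
          have := mem_Icc.1 (hBn hb.1)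
          have : b ≠ 1 := fun e => h1B (e ▸ hb.1)
          simp only [mem_insert, mem_singleton]
          omega
        rw [← eq_of_subset_of_card_le hsub (by rw [card_pair (by omega)]; exact h2)]
        exact Or.inr (filter_subset _ B)
  obtain ⟨i, -, hpair⟩ := h.exists_eq_pair_of_potGen hpot (card_pair (by omega))
  have : 1 ∈ ({2, 3} : Finset ℕ) := hpair ▸ mem_insert_self 1 _
  simp at this

/-- Compressing a member of `𝒜` that contains `1` but misses `{2, 3}` gives
`{1} ∪ [4, r + 2] ∈ 𝒜`, which `A` must meet. -/
theorem exists_mem_Icc_four_of_three (h : MemI n r 3 𝒜) (hr : 2 ≤ r) (hn : 2 * r ≤ n)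
    {A : Finset ℕ} (hA : A ∈ 𝒜) (h1 : 1 ∉ A) : ∃ w ∈ A, w ∈ Icc 4 (r + 2) := by
  obtain ⟨A₁, hA₁, h1A₁, hA₁3⟩ := h.exists_mem_one_mem_disjoint_of_three hr hn
  have hA₁n := (mem_chooseFam.1 (h.subset_chooseFam hA₁)).1
  have h1Icc : 1 ∉ Icc 4 (r + 2) := by simp
  have hA₀ : insert 1 (Icc 4 (r + 2)) ∈ 𝒜 := by
    refine h.leftCompressed.mem_of_forall_le_mem h.subset_chooseFam hA₁
      (mem_chooseFam.2 ⟨insert_subset (mem_Icc.2 ⟨le_rfl, by omega⟩)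
        (Icc_subset_Icc (by omega) (by omega)), ?_⟩)
      (fun s => s = 1 ∨ 4 ≤ s) (fun a ha => ?_) (fun s hs b hb hsb => ?_)
    · rw [card_insert_of_notMem h1Icc, Nat.card_Icc]
      omega
    · have := mem_Icc.1 (hA₁n ha)
      have : a ∉ Icc 2 3 := fun ha' => disjoint_left.1 hA₁3 ha ha'
      rw [mem_Icc] at this
      omega
    · rw [mem_insert, mem_Icc] at hb ⊢
      omega
  obtain ⟨w, hw⟩ := h.intersecting A hA _ hA₀
  rw [mem_inter, mem_insert] at hw
  obtain ⟨hwA, rfl | hw⟩ := hw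
  · exact absurd hwA h1
  · exact ⟨w, hwA, hw⟩

theorem three_le_card_inter_Icc (h : MemI n r j 𝒜) (hr : 2 ≤ r) (hn : 2 * r ≤ n)
    {A : Finset ℕ} (hA : A ∈ 𝒜) (hcore : ¬(1 ∈ A ∧ (A ∩ Icc 2 j).Nonempty)) :
    3 ≤ #(A ∩ Icc 1 (r + 2)) := by
  have hj := h.two_le
  suffices ∃ a ∈ A, ∃ b ∈ A, ∃ c ∈ A, a ≠ b ∧ a ≠ c ∧ b ≠ c ∧
      a ∈ Icc 1 (r + 2) ∧ b ∈ Icc 1 (r + 2) ∧ c ∈ Icc 1 (r + 2) by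
    obtain ⟨a, ha, b, hb, c, hc, hab, hac, hbc, ha', hb', hc'⟩ := this
    exact two_lt_card.2 ⟨a, mem_inter.2 ⟨ha, ha'⟩, b, mem_inter.2 ⟨hb, hb'⟩, c,
      mem_inter.2 ⟨hc, hc'⟩, hab, hac, hbc⟩
  by_cases h1 : 1 ∈ A
  · have hAj : Disjoint A (Icc 2 j) := by
      rw [disjoint_iff_inter_eq_empty, ← not_nonempty_iff_eq_empty]
      exact fun hne => hcore ⟨h1, hne⟩
    obtain ⟨y, hy, z, hz, hyz, hy', hz'⟩ := h.exists_ne_mem_Icc_of_disjoint (by omega) hA hAj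
    rw [mem_Icc] at hy' hz'
    exact ⟨1, h1, y, hy, z, hz, by omega, by omega, hyz, by simp, mem_Icc.2 (by omega),
      mem_Icc.2 (by omega)⟩
  have hjA := h.Icc_subset_of_one_notMem hr hn hA h1
  have h2 : 2 ∈ A := hjA (mem_Icc.2 ⟨le_rfl, hj⟩)
  obtain rfl | rfl | hj4 : j = 2 ∨ j = 3 ∨ 4 ≤ j := by omega
  · have hB := h.leftCompressed.insert_erase_mem h.subset_chooseFam hA h2 h1 le_rfl one_lt_two
    have hB2 : Disjoint (insert 1 (A.erase 2)) (Icc 2 2) := by simp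
    obtain ⟨y, hy, z, hz, hyz, hy', hz'⟩ := h.exists_ne_mem_Icc_of_disjoint (by omega) hB hB2
    rw [mem_Icc] at hy' hz'
    simp only [mem_insert, mem_erase] at hy hz
    exact ⟨2, h2, y, (hy.resolve_left (by omega)).2, z, (hz.resolve_left (by omega)).2, by omega,
      by omega, hyz, mem_Icc.2 (by omega), mem_Icc.2 (by omega), mem_Icc.2 (by omega)⟩
  · obtain ⟨w, hw, hw'⟩ := h.exists_mem_Icc_four_of_three hr hn hA h1
    rw [mem_Icc] at hw'
    exact ⟨2, h2, 3, hjA (by simp), w, hw, by omega, by omega, by omega, mem_Icc.2 (by omega),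
      mem_Icc.2 (by omega), mem_Icc.2 (by omega)⟩
  · exact ⟨2, h2, 3, hjA (mem_Icc.2 (by omega)), 4, hjA (mem_Icc.2 (by omega)), by omega,
      by omega, by omega, mem_Icc.2 (by omega), mem_Icc.2 (by omega), mem_Icc.2 (by omega)⟩

theorem hit_le_card_coreFam_add (h : MemI n r j 𝒜) (hr : 3 ≤ r) (hn : 2 * r ≤ n) (X : Finset ℕ) :
    hit X 𝒜 ≤ #(coreFam n r j X) + (r + 2).choose 3 * (n - 3).choose (r - 3) := by
  have hsplit : {A ∈ 𝒜 | (A ∩ X).Nonempty} ⊆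
      coreFam n r j X ∪ {A ∈ chooseFam n r | 3 ≤ #(A ∩ Icc 1 (r + 2))} := by
    intro A hA
    rw [mem_filter] at hA
    have hAc := h.subset_chooseFam hA.1
    by_cases hcore : 1 ∈ A ∧ (A ∩ Icc 2 j).Nonempty
    · exact mem_union_left _ (mem_filter.2 ⟨hAc, hcore.1, hcore.2, hA.2⟩)
    · exact mem_union_right _
        (mem_filter.2 ⟨hAc, h.three_le_card_inter_Icc (by omega) hn hA.1 hcore⟩)
  have hbad := card_filter_le_card_inter_le (n := n) (r := r) (k := 3)
    (Icc_subset_Icc_right (by omega : r + 2 ≤ n)) hr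
  rw [Nat.card_Icc, Nat.add_sub_cancel] at hbad
  exact (card_le_card hsplit).trans ((card_union_le _ _).trans (by omega))

theorem hit_lt_hit_AHM_of_lt (h : MemI n r j 𝒜) (hr : 3 ≤ r)
    (hn : (r + 2).choose 3 * 2 ^ (r - 1) * (r - 2) + 2 * r ≤ n) {X : Finset ℕ} {m : ℕ}
    (hX : X ⊆ Icc 2 m) (hmX : m ∈ X) (hjm : j < m) (hmr : m ≤ r + 1) :
    hit X 𝒜 < hit X (AHM n r m) := by
  have hcount : (r + 2).choose 3 * (n - 3).choose (r - 3) < (n - r - 2).choose (r - 2) := by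
    have : r - 2 ≤ (r + 2).choose 3 * 2 ^ (r - 1) * (r - 2) :=
      Nat.le_mul_of_pos_left _ (Nat.mul_pos (Nat.choose_pos (by omega)) (Nat.two_pow_pos _))
    have := Nat.mul_choose_add_lt_choose_succ (K := (r + 2).choose 3) (b := n - r - 2)
      (d := r - 1) (k := r - 3) (by omega) (by rw [show r - 3 + 1 = r - 2 by omega]; omega)
    rwa [show n - r - 2 + (r - 1) = n - 3 by omega, show r - 3 + 1 = r - 2 by omega] at this
  calc hit X 𝒜 ≤ #(coreFam n r j X) + (r + 2).choose 3 * (n - 3).choose (r - 3) :=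
        h.hit_le_card_coreFam_add hr (by omega) X
    _ < #(coreFam n r j X) + (n - r - 2).choose (r - 2) := by omega
    _ ≤ hit X (AHM n r m) :=
        card_coreFam_add_choose_le_hit_AHM hX hmX hjm hmr (by omega) (by omega)

theorem filter_subset_AHM (h : MemI n r j 𝒜) (hr : 2 ≤ r) (hn : 2 * r ≤ n) {X : Finset ℕ}
    {m : ℕ} (hX : X ⊆ Icc 2 m) (hmj : m ≤ j) :
    {A ∈ 𝒜 | (A ∩ X).Nonempty} ⊆ {A ∈ AHM n r m | (A ∩ X).Nonempty} := by
  intro A hA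
  rw [mem_filter] at hA ⊢
  refine ⟨mem_filter.2 ⟨h.subset_chooseFam hA.1, ?_⟩, hA.2⟩
  by_cases h1 : 1 ∈ A
  · exact Or.inl ⟨h1, hA.2.mono (inter_subset_inter_left hX)⟩
  · exact Or.inr ((Icc_subset_Icc_right hmj).trans (h.Icc_subset_of_one_notMem hr hn hA.1 h1))

theorem exists_mem_AHM_notMem (h : MemI n r j 𝒜) (hr : 2 ≤ r) (hn : 2 * r ≤ n)
    (hjr : j ≤ r + 1) {m : ℕ} (hm : 2 ≤ m) (hmj : m ≤ j) (hne : 𝒜 ≠ AHM n r m) :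
    ∃ W ∈ AHM n r m, m ∈ W ∧ W ∉ 𝒜 := by
  have hmW : ∀ W : Finset ℕ, Icc 2 m ⊆ W → m ∈ W := fun W hW => hW (mem_Icc.2 ⟨hm, le_rfl⟩)
  obtain hmj | rfl := hmj.lt_or_eq
  · obtain ⟨W, hW, hmW', hW1j⟩ := exists_mem_chooseFam_superset_disjoint (n := n) (r := r)
      (K := Icc 2 m) (F := {1, j}) (Icc_subset_Icc (by omega) (by omega))
      (by rw [Nat.card_Icc]; omega)
      (by simp; omega) (by have := card_le_two (a := 1) (b := j); omega)
    refine ⟨W, mem_filter.2 ⟨hW, Or.inr hmW'⟩, hmW W hmW', fun hW𝒜 => ?_⟩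
    have h1 : 1 ∉ W := fun h1 => disjoint_left.1 hW1j h1 (by simp)
    have hjW := h.Icc_subset_of_one_notMem hr hn hW𝒜 h1 (mem_Icc.2 ⟨h.two_le, le_rfl⟩)
    exact disjoint_left.1 hW1j hjW (by simp)
  · have hpot : ¬PotGen n r 𝒜 (Icc 2 m) := fun hpot => hne (h.eq_AHM_of_potGen hr hn hjr hpot)
    simp only [PotGen, not_and, not_forall] at hpot
    obtain ⟨W, hW, hmW', hW𝒜⟩ := hpot (Icc_subset_Icc (by omega) (by omega))
    exact ⟨W, mem_filter.2 ⟨hW, Or.inr hmW'⟩, hmW W hmW', hW𝒜⟩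

theorem hit_lt_hit_AHM_of_le (h : MemI n r j 𝒜) (hr : 2 ≤ r) (hn : 2 * r ≤ n) (hjr : j ≤ r + 1)
    {X : Finset ℕ} {m : ℕ} (hX : X ⊆ Icc 2 m) (hmX : m ∈ X) (hmj : m ≤ j)
    (hne : 𝒜 ≠ AHM n r m) : hit X 𝒜 < hit X (AHM n r m) := by
  obtain ⟨W, hW, hmW, hW𝒜⟩ :=
    h.exists_mem_AHM_notMem hr hn hjr (mem_Icc.1 (hX hmX)).1 hmj hne
  refine card_lt_card ((ssubset_iff_of_subset (h.filter_subset_AHM hr hn hX hmj)).2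
    ⟨W, mem_filter.2 ⟨hW, m, mem_inter.2 ⟨hmW, hmX⟩⟩, fun hW' => hW𝒜 (mem_filter.1 hW').1⟩)

end MemI

/-- For `r ≥ 3` and `n` sufficiently large: for every nonempty
`X ⊆ [2, r+1]` with `X ≠ {2}`, writing `m = max X`, every MLCIF
`𝒜 ∈ ⋃_{j=2}^{r+1} I_j` with `𝒜 ≠ AHM_m` satisfies `hit_X(AHM_m) > hit_X(𝒜)`. -/
theorem stmt15 :
    ∀ r : ℕ, 3 ≤ r → ∃ N : ℕ, ∀ n : ℕ, N ≤ n →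
      ∀ X : Finset ℕ, X ⊆ Finset.Icc 2 (r + 1) → ∀ hX : X.Nonempty, X ≠ {2} →
        ∀ 𝒜 : Finset (Finset ℕ), (∃ j : ℕ, 2 ≤ j ∧ j ≤ r + 1 ∧ MemI n r j 𝒜) →
          𝒜 ≠ AHM n r (X.max' hX) →
          hit X 𝒜 < hit X (AHM n r (X.max' hX)) := by
  intro r hr
  refine ⟨(r + 2).choose 3 * 2 ^ (r - 1) * (r - 2) + 2 * r, fun n hn X hXr hX _ 𝒜 hj hne => ?_⟩
  obtain ⟨j, -, hjr, h⟩ := hj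
  set m := X.max' hX
  have hmX : m ∈ X := X.max'_mem hX
  have hXm : X ⊆ Icc 2 m := fun x hx => mem_Icc.2 ⟨(mem_Icc.1 (hXr hx)).1, X.le_max' x hx⟩
  rcases lt_or_ge j m with hjm | hmj
  · exact h.hit_lt_hit_AHM_of_lt hr hn hXm hmX hjm (mem_Icc.1 (hXr hmX)).2
  · exact h.hit_lt_hit_AHM_of_le (by omega) (by omega) hjr hXm hmX hmj hne
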